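/- arXiv:math/0510561 — 5 statements merged into one kernel-verified Lean document; each statement's English description precedes it below -/
import Mathlib

section
/- If K : S¹ → ℝ³ is a continuous injective closed curve and a is a point of its image such that no line through a meets the image of K in three points with a first (i.e., there is no trisecant starting at a), then the union of all chords from a to points of K is an embedded disk with boundary K; in particular any two chords from a intersect only at a. -/
/-!
Parametrise the closed unit disk as the cone over the unit circle with apex a point `p` of it:
every point of the disk lies on a chord from `p`, and as the circle has no trisecants, two such
chords meet only at `p`. Because no trisecant starts at `a`, the chords from `a` to the knot have
the same incidence pattern. Hence matching the chord from `p` to the circle point at angle `θ`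
linearly with the chord from `a` to `K θ` gives a well-defined injective map. It is continuous
because the cone parametrisation `[0, 1] × S¹ → disk` is a continuous surjection from a compact
space onto a Hausdorff one, hence a quotient map.
-/

open Metric Set Function AffineMap

def NoTrisecantFrom {V : Type*} [AddCommGroup V] [Module ℝ V] (S : Set V) (a : V) : Prop :=
  ¬ ∃ b ∈ S, ∃ c ∈ S, b ≠ a ∧ c ≠ a ∧ b ≠ c ∧ b ∈ segment ℝ a c

namespace NoTrisecantFrom

variable {V : Type*} [AddCommGroup V] [Module ℝ V] {S : Set V} {a b c : V}

theorem eq_of_smul_sub_eq_smul_sub_of_le (h : NoTrisecantFrom S a) (hb : b ∈ S) (hc : c ∈ S)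
    (hba : b ≠ a) (hca : c ≠ a) {r r' : ℝ} (hr : 0 < r) (hle : r ≤ r')
    (heq : r • (b - a) = r' • (c - a)) : b = c := by
  by_contra hbc
  refine h ⟨c, hc, b, hb, hca, hba, Ne.symm hbc, ?_⟩
  have hr' : 0 < r' := hr.trans_le hle
  rw [segment_eq_image_lineMap]
  refine ⟨r / r', ⟨by positivity, div_le_one_of_le₀ hle hr'.le⟩, ?_⟩
  rw [lineMap_apply_module', div_eq_inv_mul, mul_smul, heq, inv_smul_smul₀ hr'.ne',
    sub_add_cancel]

theorem lineMap_eq_lineMap (h : NoTrisecantFrom S a) (hb : b ∈ S) (hc : c ∈ S) {r r' : ℝ}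
    (hr : 0 ≤ r) (hr' : 0 ≤ r') (heq : lineMap a b r = lineMap a c r') :
    (r = 0 ∨ b = a) ∧ (r' = 0 ∨ c = a) ∨ (r = r' ∧ b = c) := by
  rw [lineMap_apply_module', lineMap_apply_module', add_left_inj] at heq
  by_cases h0 : r • (b - a) = 0
  · rw [h0, eq_comm, smul_eq_zero, sub_eq_zero] at heq
    rw [smul_eq_zero, sub_eq_zero] at h0
    exact Or.inl ⟨h0, heq⟩
  · obtain ⟨hr0, hba⟩ := smul_ne_zero_iff.mp h0
    obtain ⟨hr0', hca⟩ := smul_ne_zero_iff.mp (heq ▸ h0)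
    have hbc : b = c := by
      rcases le_total r r' with hle | hle
      · exact h.eq_of_smul_sub_eq_smul_sub_of_le hb hc (sub_ne_zero.mp hba) (sub_ne_zero.mp hca)
          (hr.lt_of_ne' hr0) hle heq
      · exact (h.eq_of_smul_sub_eq_smul_sub_of_le hc hb (sub_ne_zero.mp hca)
          (sub_ne_zero.mp hba) (hr'.lt_of_ne' hr0') hle heq.symm).symm
    subst hbc
    exact Or.inr ⟨smul_left_injective ℝ hba heq, rfl⟩

theorem segment_inter_segment (h : NoTrisecantFrom S a) (hb : b ∈ S) (hc : c ∈ S)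
    (hbc : b ≠ c) : segment ℝ a b ∩ segment ℝ a c = {a} := by
  refine eq_singleton_iff_unique_mem.mpr ⟨⟨left_mem_segment ℝ a b, left_mem_segment ℝ a c⟩, ?_⟩
  simp only [segment_eq_image_lineMap]
  rintro _ ⟨⟨r, ⟨hr, -⟩, rfl⟩, ⟨r', ⟨hr', -⟩, heq⟩⟩
  rcases h.lineMap_eq_lineMap hb hc hr hr' heq.symm with ⟨h0 | rfl, -⟩ | ⟨-, rfl⟩
  · simp [h0]
  · simp
  · exact absurd rfl hbc

end NoTrisecantFrom

theorem noTrisecantFrom_sphere {E : Type*} [NormedAddCommGroup E] [NormedSpace ℝ E]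
    [StrictConvexSpace ℝ E] {c p : E} {R : ℝ} (hp : p ∈ closedBall c R) :
    NoTrisecantFrom (sphere c R) p := by
  rintro ⟨b, hb, d, hd, hbp, -, hbd, hbseg⟩
  have hpd : p ≠ d := by
    rintro rfl
    exact hbp (by simpa using hbseg)
  have := openSegment_subset_ball_of_ne hp (sphere_subset_closedBall hd) hpd
    (mem_openSegment_of_ne_left_right hbp.symm hbd.symm hbseg)
  exact (mem_ball.mp this).ne (mem_sphere.mp hb)

theorem closedBall_eq_biUnion_segment {E : Type*} [NormedAddCommGroup E] [NormedSpace ℝ E]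
    {c p : E} {R : ℝ} (hp : p ∈ sphere c R) :
    closedBall c R = ⋃ s ∈ sphere c R, segment ℝ p s := by
  refine Subset.antisymm (fun x hx => ?_) (iUnion₂_subset fun s hs =>
    (convex_closedBall c R).segment_subset (sphere_subset_closedBall hp)
      (sphere_subset_closedBall hs))
  rcases eq_or_ne x p with rfl | hxp
  · exact mem_biUnion hp (left_mem_segment ℝ x x)
  have hxp' : 0 < dist x p := dist_pos.mpr hxp
  rw [mem_closedBall] at hx
  rw [mem_sphere] at hp
  -- the ray from `p` through `x` leaves the ball before the parameter `2R / dist x p`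
  obtain ⟨t, ht, hts⟩ : ∃ t ∈ Icc 1 (2 * R / dist x p), dist (lineMap p x t) c = R := by
    have hR : dist x p ≤ 2 * R := by linarith [dist_triangle x c p, dist_comm c p]
    refine intermediate_value_Icc ((one_le_div hxp').mpr hR)
      ((lineMap_continuous.dist continuous_const).continuousOn) ⟨by simpa using hx, ?_⟩
    have hfar : dist (lineMap p x (2 * R / dist x p) : E) p = 2 * R := by
      rw [dist_lineMap_left, Real.norm_of_nonneg (div_nonneg (by linarith) hxp'.le),
        dist_comm p x, div_mul_cancel₀ _ hxp'.ne']
    linarith [dist_triangle (lineMap p x (2 * R / dist x p) : E) c p, dist_comm c p]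
  have ht0 : 0 < t := zero_lt_one.trans_le ht.1
  refine mem_biUnion (mem_sphere.mpr hts) ?_
  rw [segment_eq_image_lineMap]
  refine ⟨t⁻¹, ⟨by positivity, inv_le_one_of_one_le₀ ht.1⟩, ?_⟩
  simp only [lineMap_apply_module', add_sub_cancel_right, smul_smul, inv_mul_cancel₀ ht0.ne',
    one_smul, sub_add_cancel]

section Cone

variable {X V : Type*} [AddCommGroup V] [Module ℝ V]

def cone (v : V) (γ : X → V) (q : unitInterval × X) : V := lineMap v (γ q.2) (q.1 : ℝ)

theorem range_cone (v : V) (γ : X → V) : range (cone v γ) = ⋃ x, segment ℝ v (γ x) := by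
  ext y
  simp only [cone, segment_eq_image_lineMap, mem_range, mem_iUnion, mem_image, Prod.exists,
    Subtype.exists, unitInterval, mem_Icc, exists_prop]
  exact ⟨fun ⟨r, hr, x, hx⟩ => ⟨x, r, hr, hx⟩, fun ⟨x, r, hr, hx⟩ => ⟨r, hr, x, hx⟩⟩

theorem cone_eq_cone_iff {γ : X → V} (hγ : Injective γ) {x₀ : X}
    (h : NoTrisecantFrom (range γ) (γ x₀)) {q q' : unitInterval × X} :
    cone (γ x₀) γ q = cone (γ x₀) γ q' ↔
      ((q.1 : ℝ) = 0 ∨ q.2 = x₀) ∧ ((q'.1 : ℝ) = 0 ∨ q'.2 = x₀) ∨ q = q' := by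
  constructor
  · intro hq
    rcases h.lineMap_eq_lineMap (mem_range_self _) (mem_range_self _) q.1.2.1 q'.1.2.1 hq with
      h' | ⟨h1, h2⟩
    · simpa only [hγ.eq_iff] using Or.inl h'
    · exact Or.inr (Prod.ext (Subtype.ext h1) (hγ h2))
  · rintro (h | rfl)
    · rcases h with ⟨h1 | h1, h2 | h2⟩ <;> simp [cone, h1, h2]
    · rfl

variable [TopologicalSpace X] {E F : Type*} [NormedAddCommGroup E] [NormedSpace ℝ E]
  [NormedAddCommGroup F] [NormedSpace ℝ F]

theorem continuous_cone {v : E} {γ : X → E} (hγ : Continuous γ) : Continuous (cone v γ) := by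
  unfold cone
  fun_prop

theorem exists_continuousOn_injOn_comp_cone_eq [CompactSpace X] {σ : X → E} {κ : X → F}
    (hσ : Continuous σ) (hκ : Continuous κ) (hσi : Injective σ) (hκi : Injective κ) {x₀ : X}
    (hσt : NoTrisecantFrom (range σ) (σ x₀)) (hκt : NoTrisecantFrom (range κ) (κ x₀)) :
    ∃ f : E → F, ContinuousOn f (range (cone (σ x₀) σ)) ∧ InjOn f (range (cone (σ x₀) σ)) ∧
      f ∘ cone (σ x₀) σ = cone (κ x₀) κ := by
  classical
  have hfib : ∀ q q', cone (σ x₀) σ q = cone (σ x₀) σ q' ↔ cone (κ x₀) κ q = cone (κ x₀) κ q' :=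
    fun q q' => by rw [cone_eq_cone_iff hσi hσt, cone_eq_cone_iff hκi hκt]
  have hΦc : Continuous (rangeFactorization (cone (σ x₀) σ)) :=
    (continuous_cone hσ).rangeFactorization
  set Φ : C(unitInterval × X, range (cone (σ x₀) σ)) := ⟨_, hΦc⟩
  have hΦ : Topology.IsQuotientMap Φ :=
    hΦc.isClosedMap.isQuotientMap hΦc rangeFactorization_surjective
  have hfact : FactorsThrough (cone (κ x₀) κ) (rangeFactorization (cone (σ x₀) σ)) :=
    fun q q' hq => (hfib q q').mp (congrArg Subtype.val hq)
  set Ψ : C(unitInterval × X, F) := ⟨cone (κ x₀) κ, continuous_cone hκ⟩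
  set g := hΦ.lift Ψ hfact
  set f : E → F := fun y => if hy : y ∈ range (cone (σ x₀) σ) then g ⟨y, hy⟩ else 0
  have hcomp : f ∘ cone (σ x₀) σ = cone (κ x₀) κ := by
    funext q
    exact (dif_pos (mem_range_self q)).trans (DFunLike.congr_fun (hΦ.lift_comp Ψ hfact) q)
  refine ⟨f, ?_, ?_, hcomp⟩
  · rw [continuousOn_iff_continuous_domRestrict]
    convert g.continuous
    ext ⟨y, hy⟩
    exact dif_pos hy
  · rintro _ ⟨q, rfl⟩ _ ⟨q', rfl⟩ h
    exact (hfib q q').mpr (by simpa only [← comp_apply (f := f), hcomp] using h)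

end Cone

namespace AddCircle

variable {T : ℝ}

noncomputable def toPlane (θ : AddCircle T) : EuclideanSpace ℝ (Fin 2) :=
  Complex.orthonormalBasisOneI.repr (θ.toCircle : ℂ)

theorem continuous_toPlane : Continuous (toPlane (T := T)) := by
  unfold toPlane; fun_prop

theorem injective_toPlane (hT : T ≠ 0) : Injective (toPlane (T := T)) :=
  Complex.orthonormalBasisOneI.repr.injective.comp
    (Circle.coe_injective.comp (injective_toCircle hT))

theorem range_toPlane (hT : T ≠ 0) : range (toPlane (T := T)) = sphere 0 1 := by
  have hsurj : Surjective (toCircle (T := T)) := fun z =>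
    ⟨(homeomorphCircle hT).symm z, by rw [← homeomorphCircle_apply hT, Homeomorph.apply_symm_apply]⟩
  ext y
  constructor
  · rintro ⟨θ, rfl⟩
    simp [toPlane, Circle.norm_coe]
  · intro hy
    set e := Complex.orthonormalBasisOneI.repr
    have hz : e.symm y ∈ sphere (0 : ℂ) 1 := by simpa using hy
    obtain ⟨θ, hθ⟩ := hsurj ⟨e.symm y, hz⟩
    exact ⟨θ, by simp only [toPlane, hθ]; exact e.apply_symm_apply y⟩

end AddCircle

/-- If `K : S¹ → ℝ³` is a continuous injective closed curve and `a` is a point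
of its image such that no line through `a` meets the image of `K` in three
points with `a` first (no trisecant starting at `a`), then the union of all
chords from `a` to points of `K` is an embedded disk with boundary the curve;
in particular any two chords from `a` meet only at `a`. -/
theorem chord_disk_of_no_trisecant_from_point
    (K : AddCircle (1 : ℝ) → EuclideanSpace ℝ (Fin 3))
    (hK : Continuous K) (hinj : Function.Injective K)
    (a : EuclideanSpace ℝ (Fin 3)) (ha : a ∈ Set.range K)
    (htri : ¬ ∃ b ∈ Set.range K, ∃ c ∈ Set.range K,
      b ≠ a ∧ c ≠ a ∧ b ≠ c ∧ b ∈ segment ℝ a c) :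
    (∃ f : EuclideanSpace ℝ (Fin 2) → EuclideanSpace ℝ (Fin 3),
      ContinuousOn f (closedBall 0 1) ∧ Set.InjOn f (closedBall 0 1) ∧
      f '' (closedBall 0 1) = (⋃ b ∈ Set.range K, segment ℝ a b) ∧
      f '' (sphere 0 1) = Set.range K) ∧
    (∀ b ∈ Set.range K, ∀ c ∈ Set.range K, b ≠ c →
      segment ℝ a b ∩ segment ℝ a c = {a}) := by
  obtain ⟨θ₀, rfl⟩ := ha
  set σ : AddCircle (1 : ℝ) → EuclideanSpace ℝ (Fin 2) := AddCircle.toPlane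
  have hrange : range σ = sphere 0 1 := AddCircle.range_toPlane one_ne_zero
  obtain ⟨f, hcont, hinjOn, hcomp⟩ := exists_continuousOn_injOn_comp_cone_eq
    AddCircle.continuous_toPlane hK (AddCircle.injective_toPlane one_ne_zero) hinj
    (hrange ▸ noTrisecantFrom_sphere (sphere_subset_closedBall (hrange ▸ mem_range_self θ₀))) htri
  have hball : closedBall 0 1 = range (cone (σ θ₀) σ) := by
    rw [range_cone, closedBall_eq_biUnion_segment (hrange ▸ mem_range_self θ₀), ← hrange,
      biUnion_range]
  have hfK : f ∘ σ = K :=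
    funext fun θ => by simpa [cone] using congrFun hcomp (1, θ)
  refine ⟨⟨f, hball ▸ hcont, hball ▸ hinjOn, ?_, ?_⟩,
    fun b hb c hc => NoTrisecantFrom.segment_inter_segment htri hb hc⟩
  · rw [hball, ← range_comp, hcomp, range_cone, biUnion_range]
  · rw [← hrange, ← range_comp, hfK]
end

section
/- In a non-degenerate closed polygon in ℝ³, no straight line intersects three pairwise adjacent edges (i.e., three consecutive edges) in three distinct points, no two of which lie on a common edge. -/
open Set

private lemma inv_smul_aux {V : Type*} [AddCommGroup V] [Module ℝ V] {β : ℝ} (hβ : β ≠ 0)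
    {x y : V} (h : β • x = y) : x = β⁻¹ • y := by
  rw [← h, inv_smul_smul₀ hβ]

lemma aux_indep2 {V : Type*} [AddCommGroup V] [Module ℝ V] {a b c : V}
    (h : ¬ Collinear ℝ ({a, b, c} : Set V)) {α β : ℝ}
    (he : α • (b - a) + β • (c - a) = 0) : α = 0 ∧ β = 0 := by
  by_contra hcon
  apply h
  rcases eq_or_ne β 0 with hβ | hβ
  · subst hβ
    have hα : α ≠ 0 := by tauto
    have hba : b = a := by
      have h0 : α • (b - a) = 0 := by simpa using he
      exact sub_eq_zero.mp ((smul_eq_zero.mp h0).resolve_left hα)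
    subst hba
    simpa using collinear_pair ℝ b c
  · rw [collinear_iff_of_mem (show a ∈ ({a,b,c} : Set V) by simp)]
    refine ⟨b - a, ?_⟩
    intro x hx
    simp only [Set.mem_insert_iff, Set.mem_singleton_iff] at hx
    rcases hx with rfl | rfl | rfl
    · exact ⟨0, by simp⟩
    · exact ⟨1, by simp⟩
    · refine ⟨β⁻¹ * -α, ?_⟩
      rw [vadd_eq_add, ← sub_eq_iff_eq_add, mul_smul, neg_smul]
      apply inv_smul_aux hβ
      rw [eq_neg_iff_add_eq_zero, add_comm]; exact he

lemma aux_indep3 {V : Type*} [AddCommGroup V] [Module ℝ V] {a b c d : V}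
    (h : ¬ Coplanar ℝ ({a, b, c, d} : Set V)) {α β γ : ℝ}
    (he : α • (b - a) + β • (c - a) + γ • (d - a) = 0) : γ = 0 := by
  by_contra hγ
  apply h
  have hset : ({a, b, c, d} : Set V) = insert d {a, b, c} := by
    ext x; simp only [Set.mem_insert_iff, Set.mem_singleton_iff]; tauto
  rw [hset]
  have hd : d ∈ affineSpan ℝ ({a, b, c} : Set V) := by
    have h1 : γ • (d - a) = -(α • (b - a) + β • (c - a)) := by
      rw [eq_neg_iff_add_eq_zero, add_comm]; exact he
    have h2 : d - a = (γ⁻¹ * -α) • (b - a) + (γ⁻¹ * -β) • (c - a) := by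
      rw [inv_smul_aux hγ h1]; module
    have hmem : (γ⁻¹ * -α) • (b - a) + (γ⁻¹ * -β) • (c - a) ∈
        (affineSpan ℝ ({a, b, c} : Set V)).direction := by
      rw [direction_affineSpan]
      apply Submodule.add_mem <;> apply Submodule.smul_mem
      · have := vsub_mem_vectorSpan ℝ (show b ∈ ({a,b,c} : Set V) by simp)
          (show a ∈ ({a,b,c} : Set V) by simp)
        simpa using this
      · have := vsub_mem_vectorSpan ℝ (show c ∈ ({a,b,c} : Set V) by simp)
          (show a ∈ ({a,b,c} : Set V) by simp)
        simpa using this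
    have ha : a ∈ affineSpan ℝ ({a, b, c} : Set V) := mem_affineSpan ℝ (by simp)
    have := AffineSubspace.vadd_mem_of_mem_direction hmem ha
    have hda : d = ((γ⁻¹ * -α) • (b - a) + (γ⁻¹ * -β) • (c - a)) +ᵥ a := by
      rw [vadd_eq_add, ← sub_eq_iff_eq_add]; exact h2
    rwa [← hda] at this
  exact (coplanar_insert_iff_of_mem_affineSpan hd).mpr (coplanar_triple ℝ a b c)

/-- In a non-degenerate closed polygon in `ℝ³`, no straight line meets three
consecutive edges in three distinct points, no two of which lie on a common
edge: such points `p, q, r` on edges `i`, `i+1`, `i+2` are never collinear. -/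
theorem no_trisecant_through_three_consecutive_edges
    (n : ℕ) (hn : 3 ≤ n)
    (v : ZMod n → EuclideanSpace ℝ (Fin 3))
    (hcop : ∀ i j k l : ZMod n, i ≠ j → i ≠ k → i ≠ l → j ≠ k → j ≠ l → k ≠ l →
      ¬ Coplanar ℝ {v i, v j, v k, v l})
    (hcol : ∀ i j k : ZMod n, i ≠ j → i ≠ k → j ≠ k →
      ¬ Collinear ℝ {v i, v j, v k})
    (i : ZMod n) (p q r : EuclideanSpace ℝ (Fin 3))
    (hp : p ∈ segment ℝ (v i) (v (i + 1)))
    (hq : q ∈ segment ℝ (v (i + 1)) (v (i + 2)))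
    (hr : r ∈ segment ℝ (v (i + 2)) (v (i + 3)))
    (hpq : ∀ j : ZMod n, ¬ (p ∈ segment ℝ (v j) (v (j + 1)) ∧
      q ∈ segment ℝ (v j) (v (j + 1))))
    (hqr : ∀ j : ZMod n, ¬ (q ∈ segment ℝ (v j) (v (j + 1)) ∧
      r ∈ segment ℝ (v j) (v (j + 1))))
    (hpr : ∀ j : ZMod n, ¬ (p ∈ segment ℝ (v j) (v (j + 1)) ∧
      r ∈ segment ℝ (v j) (v (j + 1))))
    (hne : p ≠ q ∧ q ≠ r ∧ p ≠ r) :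
    ¬ Collinear ℝ {p, q, r} := by
  intro hC
  haveI : NeZero n := ⟨by omega⟩
  obtain ⟨hnepq, hneqr, hnepr⟩ := hne
  -- extract parameters on segments
  rw [segment_eq_image'] at hp hq hr
  obtain ⟨s, hs, hps⟩ := hp
  obtain ⟨t, ht, hqs⟩ := hq
  obtain ⟨u, hu, hrs⟩ := hr
  dsimp only at hps hqs hrs
  have hp' : p ∈ segment ℝ (v i) (v (i + 1)) := by
    rw [segment_eq_image']; exact ⟨s, hs, hps⟩
  have hq' : q ∈ segment ℝ (v (i + 1)) (v (i + 2)) := by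
    rw [segment_eq_image']; exact ⟨t, ht, hqs⟩
  -- extract collinearity data
  rw [collinear_iff_of_mem (show p ∈ ({p,q,r} : Set (EuclideanSpace ℝ (Fin 3))) by simp)] at hC
  obtain ⟨w, hw⟩ := hC
  obtain ⟨kq, hkq⟩ := hw q (by simp)
  obtain ⟨kr, hkr⟩ := hw r (by simp)
  rw [vadd_eq_add] at hkq hkr
  have hkq0 : kq ≠ 0 := by
    rintro rfl; apply hnepq; rw [hkq]; simp
  have hkr0 : kr ≠ 0 := by
    rintro rfl; apply hnepr; rw [hkr]; simp
  set a := v i with ha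
  set b := v (i + 1) with hb
  set c := v (i + 2) with hc
  set d := v (i + 3) with hd
  have hqp : q - p = kq • w := by rw [hkq]; abel
  have hrp : r - p = kr • w := by rw [hkr]; abel
  -- small natural casts are nonzero
  have hknz : ∀ k : ℕ, 0 < k → k < n → ((k : ZMod n) ≠ 0) := by
    intro k h1 h2 h0
    rw [ZMod.natCast_eq_zero_iff] at h0
    exact absurd (Nat.le_of_dvd h1 h0) (not_le.2 h2)
  have h1ne : (1 : ZMod n) ≠ 0 := by
    have := hknz 1 (by norm_num) (by omega); exact_mod_cast this
  have h2ne : (2 : ZMod n) ≠ 0 := by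
    have := hknz 2 (by norm_num) (by omega); exact_mod_cast this
  rcases eq_or_lt_of_le hn with hn3 | hn4
  · -- n = 3 : the fourth vertex is the first
    subst hn3
    have h30 : (3 : ZMod 3) = 0 := by decide
    have hda : d = a := by rw [hd, ha, h30, add_zero]
    -- key linear relation in the plane of a, b, c
    have key : (kr * (1 - s - t) + kq * s) • (b - a) +
        (kr * t - kq * (1 - u)) • (c - a) = 0 := by
      have h3 : kr • (q - p) - kq • (r - p) = 0 := by
        rw [hqp, hrp, smul_smul, smul_smul, mul_comm, sub_self]
      calc (kr * (1 - s - t) + kq * s) • (b - a) + (kr * t - kq * (1 - u)) • (c - a)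
          = kr • (q - p) - kq • (r - p) := by
            rw [← hps, ← hqs, ← hrs, hda]; module
        _ = 0 := h3
    have hne01 : i ≠ i + 1 := fun h => h1ne (by linear_combination -h)
    have hne02 : i ≠ i + 2 := fun h => h2ne (by linear_combination -h)
    have hne12 : i + 1 ≠ i + 2 := fun h => h1ne (by linear_combination -h)
    obtain ⟨hA, hB⟩ := aux_indep2 (hcol i (i + 1) (i + 2) hne01 hne02 hne12) key
    have hD : (1 - s - t) * (1 - u) + s * t = 0 := by
      have hkqD : kq * ((1 - s - t) * (1 - u) + s * t) = 0 := by
        linear_combination t * hA - (1 - s - t) * hB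
      exact (mul_eq_zero.mp hkqD).resolve_left hkq0
    obtain ⟨hs0, hs1⟩ := hs
    obtain ⟨ht0, ht1⟩ := ht
    obtain ⟨hu0, hu1⟩ := hu
    have hM : (1 - s) * (1 - t) * (1 - u) + s * t * u = 0 := by linear_combination hD
    have hP1 : 0 ≤ s * t * u := mul_nonneg (mul_nonneg hs0 ht0) hu0
    have hP2 : 0 ≤ (1 - s) * (1 - t) * (1 - u) :=
      mul_nonneg (mul_nonneg (by linarith) (by linarith)) (by linarith)
    have hstu : s * t * u = 0 := by linarith
    have hstu' : (1 - s) * (1 - t) * (1 - u) = 0 := by linarith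
    -- endpoint computations
    have hrc : u = 0 → r = c := by intro h; rw [← hrs, h]; simp
    have hra : u = 1 → r = a := by
      intro h; rw [← hrs, hda, h, one_smul]; abel
    have hpa : s = 0 → p = a := by intro h; rw [← hps, h]; simp
    have hpb : s = 1 → p = b := by intro h; rw [← hps, h, one_smul]; abel
    have hqb : t = 0 → q = b := by intro h; rw [← hqs, h]; simp
    have hqc : t = 1 → q = c := by intro h; rw [← hqs, h, one_smul]; abel
    have hidx12 : i + 1 + 1 = i + 2 := by ring
    have hu1case : u = 1 → False := by
      intro h
      refine hpr i ⟨hp', ?_⟩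
      rw [hra h, ha]
      exact left_mem_segment ℝ _ _
    have hu0case : u = 0 → False := by
      intro h
      refine hqr (i + 1) ⟨by rw [hidx12]; exact hq', ?_⟩
      rw [hidx12, hrc h, hc]
      exact right_mem_segment ℝ _ _
    rcases mul_eq_zero.mp hstu with hst | hu'
    · rcases mul_eq_zero.mp hst with hs' | ht'
      · -- s = 0
        rcases mul_eq_zero.mp hstu' with h1st | h1u
        · rcases mul_eq_zero.mp h1st with h1s | h1t
          · exact absurd (by linarith : (0:ℝ) = 1) (by norm_num)
          · -- t = 1 : p = a, q = c on edge i+2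
            have ht1' : t = 1 := by linarith
            have hidx : i + 2 + 1 = i := by
              rw [add_assoc, show (2 : ZMod 3) + 1 = 3 from by decide, h30, add_zero]
            refine hpq (i + 2) ⟨?_, ?_⟩
            · rw [hidx, hpa hs', ha]
              exact right_mem_segment ℝ _ _
            · rw [hidx, hqc ht1', hc]
              exact left_mem_segment ℝ _ _
        · exact hu1case (by linarith)
      · -- t = 0
        rcases mul_eq_zero.mp hstu' with h1st | h1u
        · rcases mul_eq_zero.mp h1st with h1s | h1t
          · -- s = 1 : p = b = q
            exact hnepq (by rw [hpb (by linarith), hqb ht'])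
          · exact absurd (by linarith : (0:ℝ) = 1) (by norm_num)
        · exact hu1case (by linarith)
    · exact hu0case hu'
  · -- n ≥ 4 : four distinct vertices, not coplanar
    have key : (kr * (1 - s - t) + kq * s) • (b - a) +
        (kr * t - kq * (1 - u)) • (c - a) + (-(kq * u)) • (d - a) = 0 := by
      have h3 : kr • (q - p) - kq • (r - p) = 0 := by
        rw [hqp, hrp, smul_smul, smul_smul, mul_comm, sub_self]
      calc (kr * (1 - s - t) + kq * s) • (b - a) + (kr * t - kq * (1 - u)) • (c - a)
            + (-(kq * u)) • (d - a)
          = kr • (q - p) - kq • (r - p) := by rw [← hps, ← hqs, ← hrs]; module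
        _ = 0 := h3
    have h3ne : (3 : ZMod n) ≠ 0 := by
      have := hknz 3 (by norm_num) (by omega); exact_mod_cast this
    have hne01 : i ≠ i + 1 := fun h => h1ne (by linear_combination -h)
    have hne02 : i ≠ i + 2 := fun h => h2ne (by linear_combination -h)
    have hne03 : i ≠ i + 3 := fun h => h3ne (by linear_combination -h)
    have hne12 : i + 1 ≠ i + 2 := fun h => h1ne (by linear_combination -h)
    have hne13 : i + 1 ≠ i + 3 := fun h => h2ne (by linear_combination -h)
    have hne23 : i + 2 ≠ i + 3 := fun h => h1ne (by linear_combination -h)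
    have hγ := aux_indep3
      (hcop i (i + 1) (i + 2) (i + 3) hne01 hne02 hne03 hne12 hne13 hne23) key
    have hu0 : u = 0 := by
      rcases mul_eq_zero.mp (neg_eq_zero.mp hγ) with h | h
      · exact absurd h hkq0
      · exact h
    have hrc : r = c := by rw [← hrs, hu0]; simp
    have hidx12 : i + 1 + 1 = i + 2 := by ring
    refine hqr (i + 1) ⟨by rw [hidx12]; exact hq', ?_⟩
    rw [hidx12, hrc, hc]
    exact right_mem_segment ℝ _ _
end

section
/- Let e₁ and e₂ be two segments in ℝ³ sharing a common endpoint v and spanning a plane P, and let p be a point of P not on the lines through e₁ or e₂. If p lies in the open region of P bounded by the two rays from v through e₁ and e₂ opposite to the segments (region 2), then the set of lines through p meeting both e₁∖{v} and e₂∖{v} is homeomorphic to a closed interval; and if a line through p meets e₁ at a and e₂ at b with a,b approaching v, then the triple (a,b,p) degenerates to (v,v,p). -/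
open Filter Topology

set_option maxHeartbeats 1000000 in
/-- Let `e₁ = [w₁, v]` and `e₂ = [v, w₂]` be two segments in `ℝ³` sharing the
endpoint `v` and spanning a plane, and let `p` be a point of the open region
of that plane bounded by the two edges (region 2, the open triangle
`w₁ v w₂`), so `p` is on neither of the two lines.  Then the family of lines
through `p` meeting both `e₁ ∖ {v}` and `e₂ ∖ {v}`, parameterized by the
intersection point with `e₁`, is a nondegenerate closed segment (homeomorphic
to a closed interval); and if such lines meet `e₁` at `a` and `e₂` at `b`
with `a, b` approaching `v`, the triple `(a, b, p)` degenerates to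
`(v, v, p)`. -/
theorem adjacent_edges_region_two_interval
    (w₁ v w₂ p : EuclideanSpace ℝ (Fin 3))
    (hplane : ¬ Collinear ℝ {w₁, v, w₂})
    (hp : ∃ s t : ℝ, 0 < s ∧ 0 < t ∧ s + t < 1 ∧
      p = v + s • (w₁ - v) + t • (w₂ - v)) :
    (∃ x₀ x₁ : EuclideanSpace ℝ (Fin 3), x₀ ≠ x₁ ∧
      {x : EuclideanSpace ℝ (Fin 3) | x ∈ segment ℝ w₁ v ∧ x ≠ v ∧
        ∃ y ∈ segment ℝ v w₂, y ≠ v ∧ Collinear ℝ {x, p, y}}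
        = segment ℝ x₀ x₁) ∧
    (∀ {ι : Type} (F : Filter ι) (A B : ι → EuclideanSpace ℝ (Fin 3)),
      (∀ i, A i ∈ segment ℝ w₁ v ∧ B i ∈ segment ℝ v w₂ ∧
        Collinear ℝ {A i, p, B i}) →
      Tendsto A F (𝓝 v) → Tendsto B F (𝓝 v) →
      Tendsto (fun i => (A i, B i, p)) F (𝓝 (v, v, p))) := by
  obtain ⟨s, t, hs, ht, hst, hp⟩ := hp
  set u₁ : EuclideanSpace ℝ (Fin 3) := w₁ - v with hu₁
  set u₂ : EuclideanSpace ℝ (Fin 3) := w₂ - v with hu₂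
  -- linear independence of u₁, u₂
  have hind : ∀ a b : ℝ, a • u₁ + b • u₂ = 0 → a = 0 ∧ b = 0 := by
    intro a b hab
    by_contra h
    apply hplane
    rw [collinear_iff_of_mem (show v ∈ ({w₁, v, w₂} : Set _) by simp)]
    rcases eq_or_ne a 0 with ha | ha
    · have hb : b ≠ 0 := by tauto
      have hu2 : u₂ = 0 := by
        have : b • u₂ = 0 := by rw [ha] at hab; simpa using hab
        simpa [hb] using this
      have hw2 : w₂ = v := by
        have h0 : w₂ - v = 0 := hu2
        exact sub_eq_zero.mp h0
      refine ⟨u₁, ?_⟩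
      rintro q hq
      simp only [Set.mem_insert_iff, Set.mem_singleton_iff] at hq
      rcases hq with h | h | h
      · exact ⟨1, by rw [h, vadd_eq_add, hu₁]; module⟩
      · exact ⟨0, by rw [h]; simp⟩
      · exact ⟨0, by rw [h, hw2]; simp⟩
    · have hu1 : u₁ = (-(b/a)) • u₂ := by
        have h' : a • u₁ = -(b • u₂) := by linear_combination (norm := module) hab
        calc u₁ = (a⁻¹ * a) • u₁ := by rw [inv_mul_cancel₀ ha, one_smul]
        _ = a⁻¹ • (a • u₁) := by rw [mul_smul]
        _ = a⁻¹ • (-(b • u₂)) := by rw [h']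
        _ = (-(b/a)) • u₂ := by rw [div_eq_inv_mul]; module
      refine ⟨u₂, ?_⟩
      rintro q hq
      simp only [Set.mem_insert_iff, Set.mem_singleton_iff] at hq
      rcases hq with h | h | h
      · exact ⟨-(b/a), by rw [h, vadd_eq_add, ← hu1, hu₁]; module⟩
      · exact ⟨0, by rw [h]; simp⟩
      · exact ⟨1, by rw [h, vadd_eq_add, hu₂]; module⟩
  have hu₁0 : u₁ ≠ 0 := fun h => one_ne_zero (hind 1 0 (by simp [h])).1
  have hu₂0 : u₂ ≠ 0 := fun h => one_ne_zero (hind 0 1 (by simp [h])).2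
  have ht1 : t < 1 := by linarith
  have hc0 : 0 < s / (1 - t) := div_pos hs (by linarith)
  have hc1 : s / (1 - t) < 1 := (div_lt_one (by linarith)).mpr (by linarith)
  have hcs : s < s / (1 - t) := by
    rw [lt_div_iff₀ (by linarith)]; nlinarith
  obtain ⟨c, hc⟩ : ∃ c : ℝ, c = s / (1 - t) := ⟨_, rfl⟩
  rw [← hc] at hc0 hc1 hcs
  constructor
  · refine ⟨v + c • u₁, w₁, ?_, ?_⟩
    · intro h
      have h0 : (c - 1) • u₁ = 0 := by
        have hw : w₁ = v + (1:ℝ) • u₁ := by rw [hu₁]; module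
        rw [hw] at h
        linear_combination (norm := module) h
      rcases smul_eq_zero.mp h0 with h' | h'
      · exact absurd (by linarith : c = 1) (ne_of_lt hc1)
      · exact hu₁0 h'
    · ext x
      simp only [Set.mem_setOf_eq]
      constructor
      · rintro ⟨hx1, hxv, y, hy1, hyv, hcol⟩
        rw [segment_symm, segment_eq_image'] at hx1
        obtain ⟨α, ⟨hα0, hα1⟩, hxeq⟩ := hx1
        rw [segment_eq_image'] at hy1
        obtain ⟨β, ⟨hβ0, hβ1⟩, hyeq⟩ := hy1
        dsimp only at hxeq hyeq
        have hαpos : 0 < α := by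
          rcases lt_or_eq_of_le hα0 with h | h; · exact h
          exfalso; apply hxv; rw [← hxeq, ← h]; simp
        have hβpos : 0 < β := by
          rcases lt_or_eq_of_le hβ0 with h | h; · exact h
          exfalso; apply hyv; rw [← hyeq, ← h]; simp
        have hxy : x ≠ y := by
          intro h
          have h0 : α • u₁ + (-β) • u₂ = 0 := by
            have := hxeq.trans (h.trans hyeq.symm)
            linear_combination (norm := module) this
          exact absurd (hind _ _ h0).1 (ne_of_gt hαpos)
        have hmem := hcol.mem_affineSpan_of_mem_of_ne (p₁ := x) (p₂ := y) (p₃ := p)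
          (by simp) (by simp) (by simp) hxy
        have hmem' : (p -ᵥ x) +ᵥ x ∈ affineSpan ℝ {x, y} := by
          rwa [vsub_vadd]
        obtain ⟨lam, hlam⟩ := vadd_left_mem_affineSpan_pair.mp hmem'
        have heq : (s - α + lam * α) • u₁ + (t - lam * β) • u₂ = 0 := by
          rw [← hxeq, ← hyeq, hp] at hlam
          simp only [vsub_eq_sub] at hlam
          linear_combination (norm := module) -hlam
        obtain ⟨h1, h2⟩ := hind _ _ heq
        have hlamβ : lam * β = t := by linarith
        have hlampos : 0 < lam := by
          rcases lt_trichotomy lam 0 with h | h | h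
          · nlinarith
          · nlinarith
          · exact h
        have hlamlt : lam < 1 := by nlinarith
        have hαs : α * (1 - lam) = s := by nlinarith
        have hlamt : t ≤ lam := by nlinarith
        have hαc : c ≤ α := by
          rw [hc, div_le_iff₀ (by linarith)]
          nlinarith
        rw [segment_eq_image']
        refine ⟨(α - c) / (1 - c), ⟨div_nonneg (by linarith) (by linarith),
          (div_le_one (by linarith)).mpr (by linarith)⟩, ?_⟩
        have hθ : ((α - c) / (1 - c)) * (1 - c) = α - c :=
          div_mul_cancel₀ _ (by intro h; exact absurd (by linarith : c = 1) (ne_of_lt hc1))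
        dsimp only
        rw [← hxeq]
        have hw : w₁ = v + (1:ℝ) • u₁ := by rw [hu₁]; module
        rw [hw,
          show v + (1:ℝ) • u₁ - (v + c • u₁) = (1 - c) • u₁ by module,
          smul_smul, hθ, hu₁]
        module
      · intro hx
        rw [segment_eq_image'] at hx
        obtain ⟨θ, ⟨hθ0, hθ1⟩, hxeq⟩ := hx
        dsimp only at hxeq
        obtain ⟨α, hα⟩ : ∃ α : ℝ, α = c + θ * (1 - c) := ⟨_, rfl⟩
        have hxval : x = v + α • u₁ := by
          rw [← hxeq, hα, hu₁]; module
        have hαc : c ≤ α := by nlinarith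
        have hα1 : α ≤ 1 := by nlinarith
        have hαpos : 0 < α := lt_of_lt_of_le hc0 hαc
        have hαs : s < α := lt_of_lt_of_le hcs hαc
        obtain ⟨β, hβ⟩ : ∃ β : ℝ, β = t * α / (α - s) := ⟨_, rfl⟩
        have hβpos : 0 < β := by
          rw [hβ]; exact div_pos (by nlinarith) (by linarith)
        have hβ1 : β ≤ 1 := by
          rw [hβ, div_le_one (by linarith)]
          have h' : s ≤ α * (1 - t) := by
            have h'' : s / (1 - t) ≤ α := by rw [← hc]; exact hαc
            have := (div_le_iff₀ (by linarith : (0:ℝ) < 1 - t)).mp h''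
            linarith
          nlinarith
        refine ⟨?_, ?_, v + β • u₂, ?_, ?_, ?_⟩
        · rw [segment_symm, segment_eq_image']
          exact ⟨α, ⟨le_of_lt hαpos, hα1⟩, by dsimp only; rw [hxval]⟩
        · rw [hxval]
          intro h
          have h0 : α • u₁ = 0 := by linear_combination (norm := module) h
          rcases smul_eq_zero.mp h0 with h' | h'
          · linarith
          · exact hu₁0 h'
        · rw [segment_eq_image']
          exact ⟨β, ⟨le_of_lt hβpos, hβ1⟩, by dsimp only⟩
        · intro h
          have h0 : β • u₂ = 0 := by linear_combination (norm := module) h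
          rcases smul_eq_zero.mp h0 with h' | h'
          · linarith
          · exact hu₂0 h'
        · rw [hxval, collinear_iff_of_mem (Set.mem_insert _ _)]
          refine ⟨(v + β • u₂) - (v + α • u₁), ?_⟩
          rintro q hq
          simp only [Set.mem_insert_iff, Set.mem_singleton_iff] at hq
          rcases hq with h | h | h
          · exact ⟨0, by rw [h]; simp⟩
          · refine ⟨(α - s) / α, ?_⟩
            have h1 : ((α - s) / α) * α = α - s := div_mul_cancel₀ _ (ne_of_gt hαpos)
            have h2 : ((α - s) / α) * β = t := by
              rw [hβ]
              field_simp [hαpos.ne', sub_ne_zero.mpr (ne_of_gt hαs)]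
            rw [h, hp, vadd_eq_add]
            linear_combination (norm := module) h1 • u₁ - h2 • u₂
          · exact ⟨1, by rw [h, vadd_eq_add]; module⟩
  · intro ι F A B _ hA hB
    exact hA.prodMk_nhds (hB.prodMk_nhds tendsto_const_nhds)
end

section
/- Adding a new vertex to a closed polygon cannot decrease its total curvature; moreover the total curvature strictly increases if the new vertex a_j together with the three adjacent vertices a_{j-1}, a_{j+1}, a_{j+2} are not coplanar. -/
/-!
Inserting `x` between `v (n+2)` and `v 0` replaces the edge `b = v 0 - v (n+2)` by the two edges
`p = x - v (n+2)` and `q = v 0 - x` with `p + q = b`, and leaves every other exterior angle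
unchanged. With `a` and `c` the edges before and after `b`, the two old exterior angles are
bounded by the three new ones via the triangle inequality for angles, applied once on each side of
`b`, together with `∠(p, q) = ∠(p, b) + ∠(b, q)`, as `b` lies in the cone spanned by `p` and `q`.
If the four vertices are not coplanar then `b, q, c` are linearly independent, and the triangle
inequality `∠(b, c) ≤ ∠(b, q) + ∠(q, c)` is strict.
-/

open InnerProductGeometry

noncomputable section

/-- The total curvature of a closed polygon with vertices `w 0, …, w (n+2)`
(cyclically): the sum of the exterior angles between consecutive edges. -/
def polygonTC (n : ℕ) (w : Fin (n + 3) → EuclideanSpace ℝ (Fin 3)) : ℝ :=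
  ∑ i : Fin (n + 3), angle (w (i + 1) - w i) (w (i + 2) - w (i + 1))

section Coplanar

variable {k V P : Type*} [DivisionRing k] [AddCommGroup V] [Module k V] [AddTorsor V P]

theorem linearIndependent_vsub_of_not_coplanar {p₀ p₁ p₂ p₃ : P}
    (h : ¬ Coplanar k {p₀, p₁, p₂, p₃}) :
    LinearIndependent k ![p₂ -ᵥ p₀, p₂ -ᵥ p₁, p₃ -ᵥ p₂] := by
  set u := ![p₂ -ᵥ p₀, p₂ -ᵥ p₁, p₃ -ᵥ p₂]
  contrapose! h
  have hspan : vectorSpan k {p₀, p₁, p₂, p₃} ≤ Submodule.span k (Set.range u) := by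
    rw [vectorSpan_eq_span_vsub_set_right k (p := p₂) (by simp), Submodule.span_le]
    have hu : ∀ i, u i ∈ Submodule.span k (Set.range u) := fun i =>
      Submodule.subset_span (Set.mem_range_self i)
    rintro _ ⟨p, hp, rfl⟩
    rcases hp with rfl | rfl | rfl | rfl <;> dsimp only
    · rw [← neg_vsub_eq_vsub_rev p₂]
      exact Submodule.neg_mem _ (hu 0)
    · rw [← neg_vsub_eq_vsub_rev p₂]
      exact Submodule.neg_mem _ (hu 1)
    · simp
    · exact hu 2
  have hdim : (Set.range u).finrank k ≤ 2 := by
    have hle := finrank_range_le_card (R := k) u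
    rw [linearIndependent_iff_card_eq_finrank_span] at h
    simp only [Fintype.card_fin] at hle h
    omega
  have := Module.Finite.span_of_finite k (Set.finite_range u)
  calc Module.rank k (vectorSpan k {p₀, p₁, p₂, p₃})
      ≤ Module.rank k (Submodule.span k (Set.range u)) := Submodule.rank_mono hspan
    _ ≤ 2 := by
        rw [← Module.finrank_eq_rank]
        exact_mod_cast hdim

end Coplanar

namespace InnerProductGeometry

variable {V : Type*} [NormedAddCommGroup V] [InnerProductSpace ℝ V]

theorem angle_lt_angle_add_angle {x y z : V} (h : LinearIndependent ℝ ![x, y, z]) :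
    angle x z < angle x y + angle y z := by
  refine (angle_le_angle_add_angle x y z).lt_of_ne fun heq => ?_
  have hy : y ≠ 0 := by simpa using h.ne_zero 1
  rcases (angle_eq_angle_add_angle_iff hy).1 heq with hπ | hmem
  · obtain ⟨-, r, -, hz⟩ := angle_eq_pi_iff.1 hπ
    have := h.notMem_span_image (s := {0}) (x := 2) (by decide)
    simp [hz, Submodule.smul_mem, Submodule.mem_span_singleton_self] at this
  · have := h.notMem_span_image (s := {0, 2}) (x := 1) (by decide)
    simp only [Set.image_insert_eq, Set.image_singleton] at this
    exact this (Submodule.span_le_restrictScalars NNReal ℝ _ hmem)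

theorem angle_eq_angle_add_add_angle_of_add_ne_zero {p q : V} (hpq : p + q ≠ 0) :
    angle p q = angle p (p + q) + angle (p + q) q :=
  angle_eq_angle_add_add_angle_add_of_mem_span hpq (Submodule.mem_span_pair.2 ⟨1, 1, by simp⟩)

theorem angle_add_angle_le_angle_add_angle_add_angle (a p q c : V) :
    angle a (p + q) + angle (p + q) c ≤ angle a p + angle p q + angle q c := by
  rcases eq_or_ne (p + q) 0 with hpq | hpq
  · rw [hpq, angle_zero_right, angle_zero_left, add_halves]
    rcases eq_or_ne p 0 with rfl | hp
    · obtain rfl : q = 0 := by simpa using hpq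
      simp only [angle_zero_right, angle_zero_left]
      linarith [angle_nonneg (0 : V) c, Real.pi_pos]
    · rw [eq_neg_of_add_eq_zero_right hpq, angle_neg_right, angle_self hp]
      linarith [angle_nonneg a p, angle_nonneg (-p) c]
  · linarith [angle_eq_angle_add_add_angle_of_add_ne_zero hpq,
      angle_le_angle_add_angle a p (p + q), angle_le_angle_add_angle (p + q) q c]

theorem angle_add_angle_lt_angle_add_angle_add_angle (a : V) {p q c : V}
    (h : LinearIndependent ℝ ![p + q, q, c]) :
    angle a (p + q) + angle (p + q) c < angle a p + angle p q + angle q c := by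
  have hpq : p + q ≠ 0 := by simpa using h.ne_zero 0
  linarith [angle_eq_angle_add_add_angle_of_add_ne_zero hpq,
    angle_le_angle_add_angle a p (p + q), angle_lt_angle_add_angle h]

end InnerProductGeometry

section Polygon

open Finset Fin.NatCast

theorem Fin.snoc_natCast {α : Type*} {m : ℕ} (v : Fin (m + 1) → α) (x : α) {k : ℕ}
    (hk : k < m + 1) : (Fin.snoc v x : Fin (m + 2) → α) k = v k := by
  have : ((k : ℕ) : Fin (m + 2)) = Fin.castSucc (k : Fin (m + 1)) := by
    ext
    simp [Fin.val_natCast, Nat.mod_eq_of_lt hk, Nat.mod_eq_of_lt (hk.trans (Nat.lt_succ_self _))]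
  rw [this, Fin.snoc_castSucc]

variable {E : Type*} [NormedAddCommGroup E] [InnerProductSpace ℝ E]

/-- The exterior angle at vertex `k + 1` of a closed polygon, with indices taken mod `m`. -/
def polygonExteriorAngle {m : ℕ} [NeZero m] (w : Fin m → E) (k : ℕ) : ℝ :=
  angle (w (k + 1 : ℕ) - w k) (w (k + 2 : ℕ) - w (k + 1 : ℕ))

theorem polygonTC_eq_sum_range (n : ℕ) (w : Fin (n + 3) → EuclideanSpace ℝ (Fin 3)) :
    polygonTC n w = ∑ k ∈ range (n + 3), polygonExteriorAngle w k := by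
  rw [polygonTC, ← Fin.sum_univ_eq_sum_range]
  simp only [polygonExteriorAngle, Nat.cast_add, Fin.cast_val_eq_self, Nat.cast_one,
    Nat.cast_ofNat]

theorem polygonExteriorAngle_snoc {m : ℕ} (v : Fin (m + 1) → E) (x : E) {k : ℕ}
    (hk : k + 2 < m + 1) :
    polygonExteriorAngle (Fin.snoc v x : Fin (m + 2) → E) k = polygonExteriorAngle v k := by
  simp only [polygonExteriorAngle, Fin.snoc_natCast v x hk,
    Fin.snoc_natCast v x (k := k + 1) (by omega), Fin.snoc_natCast v x (k := k) (by omega)]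

theorem polygonTC_eq_sum_add (n : ℕ) (v : Fin (n + 3) → EuclideanSpace ℝ (Fin 3)) :
    polygonTC n v = ∑ k ∈ range (n + 1), polygonExteriorAngle v k +
      (angle (v (Fin.last (n + 2)) - v (n + 1 : ℕ)) (v 0 - v (Fin.last (n + 2))) +
        angle (v 0 - v (Fin.last (n + 2))) (v 1 - v 0)) := by
  have h2 : ((n + 2 : ℕ) : Fin (n + 3)) = Fin.last (n + 2) := Fin.natCast_eq_last _
  have h3 : ((n + 3 : ℕ) : Fin (n + 3)) = 0 := Fin.natCast_self _
  have h4 : ((n + 4 : ℕ) : Fin (n + 3)) = 1 := by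
    rw [show n + 4 = n + 3 + 1 from rfl, Nat.cast_succ, h3, zero_add]
  rw [polygonTC_eq_sum_range, sum_range_succ, sum_range_succ, add_assoc, polygonExteriorAngle,
    polygonExteriorAngle, h2, h3, h4]

theorem polygonTC_snoc_eq_sum_add (n : ℕ) (v : Fin (n + 3) → EuclideanSpace ℝ (Fin 3))
    (x : EuclideanSpace ℝ (Fin 3)) :
    polygonTC (n + 1) (Fin.snoc v x) = ∑ k ∈ range (n + 1), polygonExteriorAngle v k +
      (angle (v (Fin.last (n + 2)) - v (n + 1 : ℕ)) (x - v (Fin.last (n + 2))) +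
        angle (x - v (Fin.last (n + 2))) (v 0 - x) + angle (v 0 - x) (v 1 - v 0)) := by
  have h3 : (Fin.snoc v x : Fin (n + 4) → _) (n + 3 : ℕ) = x := by
    rw [Fin.natCast_eq_last, Fin.snoc_last]
  have h4 : (Fin.snoc v x : Fin (n + 4) → _) (n + 4 : ℕ) = v 0 := by
    rw [Fin.natCast_self, ← Fin.castSucc_zero, Fin.snoc_castSucc]
  have h5 : (Fin.snoc v x : Fin (n + 4) → _) (n + 5 : ℕ) = v 1 := by
    rw [show n + 5 = n + 4 + 1 from rfl, Nat.cast_succ, Fin.natCast_self, zero_add,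
      ← Fin.castSucc_one, Fin.snoc_castSucc]
  rw [polygonTC_eq_sum_range, sum_range_succ, sum_range_succ, sum_range_succ,
    sum_congr rfl fun k hk => polygonExteriorAngle_snoc v x (by simp at hk; omega),
    polygonExteriorAngle, polygonExteriorAngle, polygonExteriorAngle]
  simp only [Fin.snoc_natCast v x (show n + 1 < n + 3 by omega),
    Fin.snoc_natCast v x (show n + 2 < n + 3 by omega), h3, h4, h5, Fin.natCast_eq_last (n + 2)]
  ring

end Polygon

/-- Adding a new vertex `x` to a closed polygon (inserted between the last
vertex and the first) cannot decrease its total curvature; moreover the total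
curvature strictly increases if the new vertex together with its neighbor
`v (n+2)` and the following two vertices `v 0`, `v 1` are not coplanar. -/
theorem polygonTC_le_polygonTC_snoc (n : ℕ)
    (v : Fin (n + 3) → EuclideanSpace ℝ (Fin 3))
    (x : EuclideanSpace ℝ (Fin 3)) :
    polygonTC n v ≤ polygonTC (n + 1) (Fin.snoc v x) ∧
    (¬ Coplanar ℝ {v (Fin.last (n + 2)), x, v 0, v 1} →
      polygonTC n v < polygonTC (n + 1) (Fin.snoc v x)) := by
  have hsplit : v 0 - v (Fin.last (n + 2)) = (x - v (Fin.last (n + 2))) + (v 0 - x) := by abel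
  rw [polygonTC_eq_sum_add, polygonTC_snoc_eq_sum_add, hsplit]
  refine ⟨?_, fun hcop => ?_⟩
  · exact add_le_add_right (angle_add_angle_le_angle_add_angle_add_angle _ _ _ _) _
  · have hind := linearIndependent_vsub_of_not_coplanar hcop
    simp only [vsub_eq_sub, hsplit] at hind
    exact add_lt_add_right (angle_add_angle_lt_angle_add_angle_add_angle _ hind) _
end
end

section
/- Let σ : S¹ → S² be a closed curve on the unit sphere that visits the north pole N and the south pole S alternately in the cyclic order N, S, N, S (i.e., there are four cyclically ordered parameters mapping alternately to N and S). Then σ intersects every great circle of S² that does not pass through the poles in at least four points. -/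
open scoped RealInnerProductSpace

lemma ivt_zero_open (g : ℝ → ℝ) (hg : Continuous g) {a b c : ℝ}
    (hab : a < b) (hc : c ≠ 0) (ha : g a = c) (hb : g b = -c) :
    ∃ t ∈ Set.Ioo a b, g t = 0 := by
  have h0 : (0 : ℝ) ∈ Set.uIcc (g a) (g b) := by
    rw [ha, hb]
    rcases lt_or_gt_of_ne hc with h | h
    · exact Set.mem_uIcc.2 (Or.inl ⟨h.le, by linarith⟩)
    · exact Set.mem_uIcc.2 (Or.inr ⟨by linarith, h.le⟩)
  obtain ⟨t, ht, hgt⟩ := intermediate_value_uIcc hg.continuousOn h0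
  rw [Set.uIcc_of_le hab.le] at ht
  refine ⟨t, ⟨lt_of_le_of_ne ht.1 ?_, lt_of_le_of_ne ht.2 ?_⟩, hgt⟩
  · rintro rfl; rw [ha] at hgt; exact hc hgt
  · rintro rfl; rw [hb] at hgt; exact hc (by linarith)

/-- Let `σ` be a closed curve on the unit sphere `S² ⊆ ℝ³` which visits the
north pole `N` and the south pole `S = -N` alternately in the cyclic order
`N, S, N, S`.  Then `σ` crosses every great circle not through the poles
(given by a plane through the origin with normal `u` not orthogonal to `N`)
at least four times: there are four cyclically ordered parameters at which
`σ` lies on the great circle. -/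
theorem sphere_curve_NSNS_meets_great_circles_four_times
    (σ : AddCircle (1 : ℝ) → EuclideanSpace ℝ (Fin 3))
    (hσ : Continuous σ) (hsph : ∀ z, ‖σ z‖ = 1)
    (N : EuclideanSpace ℝ (Fin 3)) (hN : ‖N‖ = 1)
    (q : Fin 4 → ℝ) (hq : StrictMono q) (hq1 : ∀ i, q i < q 0 + 1)
    (h0 : σ ↑(q 0) = N) (h1 : σ ↑(q 1) = -N)
    (h2 : σ ↑(q 2) = N) (h3 : σ ↑(q 3) = -N)
    (u : EuclideanSpace ℝ (Fin 3)) (hu : u ≠ 0) (hpole : ⟪u, N⟫ ≠ 0) :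
    ∃ r : Fin 4 → ℝ, StrictMono r ∧ (∀ i, r i < r 0 + 1) ∧
      ∀ i, ⟪u, σ ↑(r i)⟫ = 0 := by
  have hg : Continuous (fun t : ℝ => ⟪u, σ (t : AddCircle (1 : ℝ))⟫) :=
    continuous_const.inner (hσ.comp (AddCircle.continuous_mk' (1 : ℝ)))
  have hga : ⟪u, σ ((q 0 : ℝ) : AddCircle (1 : ℝ))⟫ = ⟪u, N⟫ := by rw [h0]
  have hgb : ⟪u, σ ((q 1 : ℝ) : AddCircle (1 : ℝ))⟫ = -⟪u, N⟫ := by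
    rw [h1, inner_neg_right]
  have hgc : ⟪u, σ ((q 2 : ℝ) : AddCircle (1 : ℝ))⟫ = ⟪u, N⟫ := by rw [h2]
  have hgd : ⟪u, σ ((q 3 : ℝ) : AddCircle (1 : ℝ))⟫ = -⟪u, N⟫ := by
    rw [h3, inner_neg_right]
  have hwrap : ((q 0 + 1 : ℝ) : AddCircle (1 : ℝ)) = ((q 0 : ℝ) : AddCircle (1 : ℝ)) :=
    AddCircle.coe_add_period 1 (q 0)
  have hge : ⟪u, σ ((q 0 + 1 : ℝ) : AddCircle (1 : ℝ))⟫ = ⟪u, N⟫ := by rw [hwrap, h0]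
  have hq01 : q 0 < q 1 := hq (by decide)
  have hq12 : q 1 < q 2 := hq (by decide)
  have hq23 : q 2 < q 3 := hq (by decide)
  have hneg : (-⟪u, N⟫ : ℝ) ≠ 0 := neg_ne_zero.2 hpole
  obtain ⟨r0, hr0, hz0⟩ := ivt_zero_open _ hg hq01 hpole hga hgb
  obtain ⟨r1, hr1, hz1⟩ := ivt_zero_open _ hg hq12 hneg hgb (by rw [hgc, neg_neg])
  obtain ⟨r2, hr2, hz2⟩ := ivt_zero_open _ hg hq23 hpole hgc hgd
  obtain ⟨r3, hr3, hz3⟩ := ivt_zero_open _ hg (hq1 3) hneg hgd (by rw [hge, neg_neg])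
  have h01 : r0 < r1 := hr0.2.trans hr1.1
  have h12 : r1 < r2 := hr1.2.trans hr2.1
  have h23 : r2 < r3 := hr2.2.trans hr3.1
  have hbound : r3 < r0 + 1 := hr3.2.trans_le (by linarith [hr0.1])
  refine ⟨![r0, r1, r2, r3], ?_, ?_, ?_⟩
  · intro i j hij
    fin_cases i <;> fin_cases j <;> simp at hij ⊢ <;> linarith
  · intro i
    fin_cases i <;> simp <;> linarith
  · intro i
    fin_cases i <;> simpa using ‹_›
end
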